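/- Let K be a field of characteristic zero. For all m, n : ℕ, the family of matrices indexed by Temperley–Lieb partitions, sending a ∈ TL_{m,n} to ā ∈ Matrix (Finset (Fin m)) (Finset (Fin n)) K, is linearly independent over K. (This expresses the faithfulness of the K-linear representation of the linear Temperley–Lieb category TL(K,2), with twisting parameter δ = 2, induced by a ↦ ā; in particular the induced representations of the Temperley–Lieb algebras TL_n(K,2) are faithful.) -/

import Mathlib

open Classical

/-- A partition in `P_{m,n}`: an equivalence relation on `Fin m ⊕ Fin n`. -/
abbrev Ptn (m n : ℕ) := Setoid (Fin m ⊕ Fin n)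

/-- `(X,Y)` is a union of `a`-blocks. -/
def IsUnionOfBlocks {m n : ℕ} (a : Ptn m n) (X : Finset (Fin m)) (Y : Finset (Fin n)) :
    Prop :=
  ∀ u v, a.r u v →
    (u ∈ Sum.inl '' (X : Set (Fin m)) ∪ Sum.inr '' (Y : Set (Fin n)) ↔
     v ∈ Sum.inl '' (X : Set (Fin m)) ∪ Sum.inr '' (Y : Set (Fin n)))

/-- The zero-one matrix `ā` associated to a partition `a`. -/
noncomputable def ptnMatrix (K : Type) [Semiring K] {m n : ℕ} (a : Ptn m n) :
    Matrix (Finset (Fin m)) (Finset (Fin n)) K :=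
  Matrix.of fun X Y => if IsUnionOfBlocks a X Y then (1 : K) else 0

/-- The involution `a*` of a partition. -/
def ptnStar {m n : ℕ} (a : Ptn m n) : Ptn n m :=
  Setoid.comap Sum.swap a

/-- First projection used to define the tensor sum. -/
def tensorProj₁ {m n s t : ℕ} :
    (Fin m ⊕ Fin s) ⊕ (Fin n ⊕ Fin t) → Option (Fin m ⊕ Fin n)
  | Sum.inl (Sum.inl i) => some (Sum.inl i)
  | Sum.inl (Sum.inr _) => none
  | Sum.inr (Sum.inl j) => some (Sum.inr j)
  | Sum.inr (Sum.inr _) => none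

/-- Second projection used to define the tensor sum. -/
def tensorProj₂ {m n s t : ℕ} :
    (Fin m ⊕ Fin s) ⊕ (Fin n ⊕ Fin t) → Option (Fin s ⊕ Fin t)
  | Sum.inl (Sum.inl _) => none
  | Sum.inl (Sum.inr i) => some (Sum.inl i)
  | Sum.inr (Sum.inl _) => none
  | Sum.inr (Sum.inr j) => some (Sum.inr j)

/-- The tensor sum `a ⊞ b` of partitions. -/
def ptnTensor {m n s t : ℕ} (a : Ptn m n) (b : Ptn s t) : Ptn (m + s) (n + t) :=
  Setoid.comap (Sum.map finSumFinEquiv.symm finSumFinEquiv.symm)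
    (Relation.EqvGen.setoid fun u v =>
      (∃ p q, tensorProj₁ u = some p ∧ tensorProj₁ v = some q ∧ a.r p q) ∨
      (∃ p q, tensorProj₂ u = some p ∧ tensorProj₂ v = some q ∧ b.r p q))

/-- The generating relation of the product graph `Π(a,b)`. -/
def prodGen {m n t : ℕ} (a : Ptn m n) (b : Ptn n t) :
    (Fin m ⊕ Fin n ⊕ Fin t) → (Fin m ⊕ Fin n ⊕ Fin t) → Prop :=
  fun u v =>
    (∃ p q, a.r p q ∧ u = Sum.map id Sum.inl p ∧ v = Sum.map id Sum.inl q) ∨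
    (∃ p q, b.r p q ∧ u = Sum.inr p ∧ v = Sum.inr q)

/-- The equivalence `∼` on `Fin m ⊕ Fin n ⊕ Fin t` generated by `a` and `b`. -/
def prodSetoid {m n t : ℕ} (a : Ptn m n) (b : Ptn n t) :
    Setoid (Fin m ⊕ Fin n ⊕ Fin t) :=
  Relation.EqvGen.setoid (prodGen a b)

/-- The product `ab` of composable partitions. -/
def ptnMul {m n t : ℕ} (a : Ptn m n) (b : Ptn n t) : Ptn m t :=
  Setoid.comap (Sum.map id Sum.inr) (prodSetoid a b)

/-- The twisting number `Φ(a,b)`: the number of `∼`-classes contained in the middle copy. -/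
noncomputable def Phi {m n t : ℕ} (a : Ptn m n) (b : Ptn n t) : ℕ :=
  Nat.card {C : Quotient (prodSetoid a b) //
    ∀ u, Quotient.mk (prodSetoid a b) u = C → ∃ j : Fin n, u = Sum.inr (Sum.inl j)}

/-- The identity partition `ι_n`. -/
def idPtn (n : ℕ) : Ptn n n :=
  Relation.EqvGen.setoid fun u v => ∃ i : Fin n, u = Sum.inl i ∧ v = Sum.inr i

/-- `X` is a union of `ker(a)`-classes. -/
def KerClosed {m n : ℕ} (a : Ptn m n) (X : Finset (Fin m)) : Prop :=
  ∀ x ∈ X, ∀ i : Fin m, a.r (Sum.inl x) (Sum.inl i) → i ∈ X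

/-- `Y` is a union of `coker(a)`-classes. -/
def CokerClosed {m n : ℕ} (a : Ptn m n) (Y : Finset (Fin n)) : Prop :=
  ∀ y ∈ Y, ∀ j : Fin n, a.r (Sum.inr y) (Sum.inr j) → j ∈ Y

/-- The image `Xa` of `X` under `a`. -/
noncomputable def ptnImage {m n : ℕ} (a : Ptn m n) (X : Finset (Fin m)) :
    Finset (Fin n) :=
  Finset.univ.filter fun j => ∃ x ∈ X, a.r (Sum.inl x) (Sum.inr j)

/-- The preimage `aY` of `Y` under `a`. -/
noncomputable def ptnPreimage {m n : ℕ} (a : Ptn m n) (Y : Finset (Fin n)) :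
    Finset (Fin m) :=
  Finset.univ.filter fun i => ∃ y ∈ Y, a.r (Sum.inl i) (Sum.inr y)

/-- `Z` is an intertwining set for `(a,b)` with respect to `(X,Y)`. -/
def Intertwining {m n t : ℕ} (a : Ptn m n) (b : Ptn n t)
    (X : Finset (Fin m)) (Y : Finset (Fin t)) (Z : Finset (Fin n)) : Prop :=
  IsUnionOfBlocks a X Z ∧ IsUnionOfBlocks b Z Y

/-- A Brauer partition: every block has exactly two elements. -/
def IsBrauer {m n : ℕ} (a : Ptn m n) : Prop :=
  ∀ u : Fin m ⊕ Fin n, Nat.card {v // a.r u v} = 2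

/-- The clockwise boundary order on the vertices of a diagram. -/
def beta (m n : ℕ) : Fin m ⊕ Fin n → ℕ
  | Sum.inl i => (i : ℕ)
  | Sum.inr j => m + n - 1 - (j : ℕ)

/-- A Temperley–Lieb partition: a planar (non-crossing) Brauer partition. -/
def IsTL {m n : ℕ} (a : Ptn m n) : Prop :=
  IsBrauer a ∧
    ¬ ∃ u v p q : Fin m ⊕ Fin n, a.r u v ∧ a.r p q ∧
        beta m n u < beta m n p ∧ beta m n p < beta m n v ∧ beta m n v < beta m n q

/-- The domain of a partition: upper vertices lying in transversal blocks. -/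
noncomputable def ptnDom {m n : ℕ} (a : Ptn m n) : Finset (Fin m) :=
  Finset.univ.filter fun i => ∃ j : Fin n, a.r (Sum.inl i) (Sum.inr j)

/-- The codomain of a partition: lower vertices lying in transversal blocks. -/
noncomputable def ptnCodom {m n : ℕ} (a : Ptn m n) : Finset (Fin n) :=
  Finset.univ.filter fun j => ∃ i : Fin m, a.r (Sum.inl i) (Sum.inr j)

/-- The rank of a partition: the number of transversal blocks. -/
noncomputable def ptnRank {m n : ℕ} (a : Ptn m n) : ℕ :=
  Nat.card {C : Quotient a // ∃ (i : Fin m) (j : Fin n),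
    Quotient.mk a (Sum.inl i) = C ∧ Quotient.mk a (Sum.inr j) = C}

/-- An even-gap subset of `Fin n`. -/
def IsEvenGap {n : ℕ} (X : Finset (Fin n)) : Prop :=
  X.card ≡ n [MOD 2] ∧
    ∀ (k : ℕ) (h : k < (X.sort (· ≤ ·)).length),
      (((X.sort (· ≤ ·)).get ⟨k, h⟩ : ℕ) + 1) ≡ (k + 1) [MOD 2]

/-- The reduced (even-gap) matrix of a partition. -/
noncomputable def tlMatrix (K : Type) [Semiring K] {m n : ℕ} (a : Ptn m n) :
    Matrix {X : Finset (Fin m) // IsEvenGap X} {Y : Finset (Fin n) // IsEvenGap Y} K :=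
  Matrix.of fun X Y => if IsUnionOfBlocks a X.1 Y.1 then (1 : K) else 0

/-- The standard basis vector `e_X` of `V_n`. -/
def eVec (K : Type) [Semiring K] {n : ℕ} (X : Finset (Fin n)) :
    Finset (Fin n) → K :=
  Pi.single X 1

/-- The subspace `V_n⁺`. -/
def Vplus (K : Type) [Field K] (n : ℕ) : Submodule K (Finset (Fin n) → K) :=
  Submodule.span K (Set.range fun X : Finset (Fin n) => eVec K X + eVec K Xᶜ)

/-- The subspace `V_n⁻`. -/
def Vminus (K : Type) [Field K] (n : ℕ) : Submodule K (Finset (Fin n) → K) :=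
  Submodule.span K (Set.range fun X : Finset (Fin n) => eVec K X - eVec K Xᶜ)



section Abstract
open Finset

def IsMch (s : Finset ℕ) (A : Finset (ℕ × ℕ)) : Prop :=
  (∀ p ∈ A, p.1 < p.2 ∧ p.1 ∈ s ∧ p.2 ∈ s) ∧
  (∀ x ∈ s, ∃ p ∈ A, x = p.1 ∨ x = p.2) ∧
  (∀ p ∈ A, ∀ q ∈ A, p ≠ q → p.1 ≠ q.1 ∧ p.1 ≠ q.2 ∧ p.2 ≠ q.1 ∧ p.2 ≠ q.2)

def IsNCr (A : Finset (ℕ × ℕ)) : Prop :=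
  ∀ p ∈ A, ∀ q ∈ A, ¬ (p.1 < q.1 ∧ q.1 < p.2 ∧ p.2 < q.2)

noncomputable def crossN (A : Finset (ℕ × ℕ)) (c : ℕ) : ℕ :=
  (A.filter fun p => p.1 ≤ c ∧ c < p.2).card

noncomputable def depN (A : Finset (ℕ × ℕ)) (x : ℕ) : ℕ :=
  (A.filter fun p => p.1 < x ∧ x < p.2).card

noncomputable def PhiN (A : Finset (ℕ × ℕ)) : ℕ := ∑ p ∈ A, (p.2 - p.1)

lemma card_filter_erase {α : Type*} [DecidableEq α] (P : α → Prop) [DecidablePred P]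
    {A : Finset α} {p : α} (hp : p ∈ A) :
    ((A.erase p).filter P).card + (if P p then 1 else 0) = (A.filter P).card := by
  rw [Finset.filter_erase]
  by_cases h : P p
  · rw [if_pos h, Finset.card_erase_of_mem (Finset.mem_filter.2 ⟨hp, h⟩)]
    have : 0 < (A.filter P).card := Finset.card_pos.2 ⟨p, Finset.mem_filter.2 ⟨hp, h⟩⟩
    omega
  · rw [if_neg h, Finset.erase_eq_of_notMem, add_zero]
    intro hmem; exact h (Finset.mem_filter.1 hmem).2

lemma card_filter_insert {α : Type*} [DecidableEq α] (P : α → Prop) [DecidablePred P]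
    {A : Finset α} {q : α} (hq : q ∉ A) :
    ((insert q A).filter P).card = (A.filter P).card + (if P q then 1 else 0) := by
  rw [Finset.filter_insert]
  by_cases h : P q
  · rw [if_pos h, if_pos h,
      Finset.card_insert_of_notMem (fun hmem => hq (Finset.mem_filter.1 hmem).1)]
  · rw [if_neg h, if_neg h, add_zero]

lemma card_surgery {α : Type*} [DecidableEq α] (P : α → Prop) [DecidablePred P]
    {A : Finset α} {p₁ p₂ q : α} (h1 : p₁ ∈ A) (h2 : p₂ ∈ A) (hne : p₁ ≠ p₂) (hq : q ∉ A) :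
    ((insert q ((A.erase p₁).erase p₂)).filter P).card
      + (if P p₁ then 1 else 0) + (if P p₂ then 1 else 0)
      = (A.filter P).card + (if P q then 1 else 0) := by
  rw [card_filter_insert P
    (fun h => hq (Finset.mem_of_mem_erase (Finset.mem_of_mem_erase h)))]
  have h2' : p₂ ∈ A.erase p₁ := Finset.mem_erase.2 ⟨fun h => hne h.symm, h2⟩
  have e2 := card_filter_erase P h2'
  have e1 := card_filter_erase P h1
  omega

lemma mch_pair_eq {s : Finset ℕ} {A : Finset (ℕ × ℕ)} (hM : IsMch s A) {p q : ℕ × ℕ}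
    (hp : p ∈ A) (hq : q ∈ A)
    (h : p.1 = q.1 ∨ p.1 = q.2 ∨ p.2 = q.1 ∨ p.2 = q.2) : p = q := by
  by_contra hne
  obtain ⟨h1, h2, h3, h4⟩ := hM.2.2 p hp q hq hne
  tauto

lemma mch_empty {A : Finset (ℕ × ℕ)} (hM : IsMch ∅ A) : A = ∅ := by
  rw [Finset.eq_empty_iff_forall_notMem]
  intro p hp
  exact absurd (hM.1 p hp).2.1 (Finset.notMem_empty _)

lemma ncr_subset {A B : Finset (ℕ × ℕ)} (h : B ⊆ A) (hNC : IsNCr A) : IsNCr B :=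
  fun p hp q hq => hNC p (h hp) q (h hq)

lemma exists_innermost {s : Finset ℕ} {A : Finset (ℕ × ℕ)} (hM : IsMch s A)
    (hNC : IsNCr A) (hs : s.Nonempty) :
    ∃ k k' : ℕ, (k, k') ∈ A ∧ k < k' ∧ ∀ z ∈ s, ¬ (k < z ∧ z < k') := by
  obtain ⟨x, hx⟩ := hs
  obtain ⟨p0, hp0, -⟩ := hM.2.1 x hx
  obtain ⟨p, hp, hmin⟩ := Finset.exists_min_image A (fun p => p.2 - p.1) ⟨p0, hp0⟩
  refine ⟨p.1, p.2, by simpa using hp, (hM.1 p hp).1, ?_⟩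
  rintro z hz ⟨h1, h2⟩
  obtain ⟨q, hq, hzq⟩ := hM.2.1 z hz
  have hps := (hM.1 p hp).1
  have hqs := (hM.1 q hq).1
  have hpq : p ≠ q := by
    rintro rfl
    rcases hzq with rfl | rfl <;> omega
  have hd := hM.2.2 p hp q hq hpq
  have hq1 : p.1 < q.1 ∧ q.2 < p.2 := by
    rcases hzq with rfl | rfl
    · have hne : p.2 ≠ q.2 := hd.2.2.2
      have : ¬ (p.2 < q.2) := fun hlt => hNC p hp q hq ⟨h1, h2, hlt⟩
      omega
    · have hne : p.1 ≠ q.1 := hd.1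
      have : ¬ (q.1 < p.1) := fun hlt => hNC q hq p hp ⟨hlt, h1, h2⟩
      omega
  have := hmin q hq
  omega

end Abstract

section Abstract2
open Finset

lemma crossN_op {s : Finset ℕ} {A : Finset (ℕ × ℕ)} (hM : IsMch s A) {x z : ℕ}
    (hxz : (x, z) ∈ A) (hx : 1 ≤ x) :
    crossN A x = crossN A (x - 1) + 1 := by
  have hsort : x < z := (hM.1 _ hxz).1
  have key : A.filter (fun p => p.1 ≤ x ∧ x < p.2)
      = insert (x, z) (A.filter (fun p => p.1 ≤ x - 1 ∧ x - 1 < p.2)) := by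
    ext p
    simp only [Finset.mem_filter, Finset.mem_insert]
    constructor
    · rintro ⟨hpA, hp1, hp2⟩
      by_cases hpe : p = (x, z)
      · exact Or.inl hpe
      · refine Or.inr ⟨hpA, ?_, by omega⟩
        have : p.1 ≠ x := fun h => hpe (mch_pair_eq hM hpA hxz (Or.inl h))
        omega
    · rintro (rfl | ⟨hpA, hp1, hp2⟩)
      · exact ⟨hxz, le_refl x, show x < z from hsort⟩
      · refine ⟨hpA, by omega, ?_⟩
        by_cases hpe : p = (x, z)
        · subst hpe; exact hsort
        · have : p.2 ≠ x := fun h => hpe (mch_pair_eq hM hpA hxz (Or.inr (Or.inr (Or.inl h))))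
          omega
  have hnot : (x, z) ∉ A.filter (fun p => p.1 ≤ x - 1 ∧ x - 1 < p.2) := by
    simp only [Finset.mem_filter]
    rintro ⟨-, h, -⟩
    omega
  unfold crossN
  rw [key, Finset.card_insert_of_notMem hnot]

lemma crossN_cl {s : Finset ℕ} {A : Finset (ℕ × ℕ)} (hM : IsMch s A) {w x : ℕ}
    (hwx : (w, x) ∈ A) :
    crossN A (x - 1) = crossN A x + 1 := by
  have hsort : w < x := (hM.1 _ hwx).1
  have key : A.filter (fun p => p.1 ≤ x - 1 ∧ x - 1 < p.2)
      = insert (w, x) (A.filter (fun p => p.1 ≤ x ∧ x < p.2)) := by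
    ext p
    simp only [Finset.mem_filter, Finset.mem_insert]
    constructor
    · rintro ⟨hpA, hp1, hp2⟩
      by_cases hpe : p = (w, x)
      · exact Or.inl hpe
      · refine Or.inr ⟨hpA, by omega, ?_⟩
        have : p.2 ≠ x := fun h => hpe (mch_pair_eq hM hpA hwx (Or.inr (Or.inr (Or.inr h))))
        omega
    · rintro (rfl | ⟨hpA, hp1, hp2⟩)
      · exact ⟨hwx, show w ≤ x - 1 by omega, show x - 1 < x by omega⟩
      · refine ⟨hpA, ?_, by omega⟩
        by_cases hpe : p = (w, x)
        · subst hpe; show w ≤ x - 1; omega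
        · have : p.1 ≠ x := fun h => hpe (mch_pair_eq hM hpA hwx (Or.inr (Or.inl h)))
          omega
  have hnot : (w, x) ∉ A.filter (fun p => p.1 ≤ x ∧ x < p.2) := by
    simp only [Finset.mem_filter]
    rintro ⟨-, -, h⟩
    omega
  unfold crossN
  rw [key, Finset.card_insert_of_notMem hnot]

lemma depN_op_op {s : Finset ℕ} {A : Finset (ℕ × ℕ)} (hM : IsMch s A) (hNC : IsNCr A)
    {k k' z w : ℕ} (h1 : (k, z) ∈ A) (h2 : (k', w) ∈ A) (hkk : k < k')
    (gap : ∀ y ∈ s, ¬ (k < y ∧ y < k')) :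
    depN A k' = depN A k + 1 := by
  have hne : (k, z) ≠ (k', w) := by
    intro h
    rw [Prod.mk.injEq] at h
    omega
  have hz1 := (hM.1 _ h1).1
  have hzs := (hM.1 _ h1).2.2
  have hz2 : z ≠ k' := by
    intro h
    exact hne (mch_pair_eq hM h1 h2 (Or.inr (Or.inr (Or.inl h))))
  have hzk' : k' < z := by
    have := gap z hzs
    omega
  have key : A.filter (fun p => p.1 < k' ∧ k' < p.2)
      = insert (k, z) (A.filter (fun p => p.1 < k ∧ k < p.2)) := by
    ext p
    simp only [Finset.mem_filter, Finset.mem_insert]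
    constructor
    · rintro ⟨hpA, hp1, hp2⟩
      by_cases hpe : p = (k, z)
      · exact Or.inl hpe
      · refine Or.inr ⟨hpA, ?_, by omega⟩
        have hne1 : p.1 ≠ k := fun h => hpe (mch_pair_eq hM hpA h1 (Or.inl h))
        have hp1s := (hM.1 p hpA).2.1
        have := gap p.1 hp1s
        omega
    · rintro (rfl | ⟨hpA, hp1, hp2⟩)
      · exact ⟨h1, show k < k' from hkk, show k' < z from hzk'⟩
      · refine ⟨hpA, by omega, ?_⟩
        have hne2 : p.2 ≠ k' := by
          intro h
          have := mch_pair_eq hM hpA h2 (Or.inr (Or.inr (Or.inl h)))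
          subst this
          simp only at hp1
          omega
        have hp2s := (hM.1 p hpA).2.2
        have := gap p.2 hp2s
        omega
  have hnot : (k, z) ∉ A.filter (fun p => p.1 < k ∧ k < p.2) := by
    simp only [Finset.mem_filter]
    rintro ⟨-, h, -⟩
    omega
  unfold depN
  rw [key, Finset.card_insert_of_notMem hnot]

lemma depN_cl_cl {s : Finset ℕ} {A : Finset (ℕ × ℕ)} (hM : IsMch s A) (hNC : IsNCr A)
    {k k' x w : ℕ} (h1 : (x, k) ∈ A) (h2 : (w, k') ∈ A) (hkk : k < k')
    (gap : ∀ y ∈ s, ¬ (k < y ∧ y < k')) :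
    depN A k = depN A k' + 1 := by
  have hne : (x, k) ≠ (w, k') := by
    intro h
    rw [Prod.mk.injEq] at h
    omega
  have hw1 := (hM.1 _ h2).1
  have hws := (hM.1 _ h2).2.1
  have hwk : w ≠ k := by
    intro h
    exact hne (mch_pair_eq hM h1 h2 (Or.inr (Or.inr (Or.inl h.symm))))
  have hwlt : w < k := by
    have := gap w hws
    omega
  have key : A.filter (fun p => p.1 < k ∧ k < p.2)
      = insert (w, k') (A.filter (fun p => p.1 < k' ∧ k' < p.2)) := by
    ext p
    simp only [Finset.mem_filter, Finset.mem_insert]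
    constructor
    · rintro ⟨hpA, hp1, hp2⟩
      by_cases hpe : p = (w, k')
      · exact Or.inl hpe
      · refine Or.inr ⟨hpA, by omega, ?_⟩
        have hne2 : p.2 ≠ k' := fun h => hpe (mch_pair_eq hM hpA h2 (Or.inr (Or.inr (Or.inr h))))
        have hp2s := (hM.1 p hpA).2.2
        have := gap p.2 hp2s
        omega
    · rintro (rfl | ⟨hpA, hp1, hp2⟩)
      · exact ⟨h2, show w < k from hwlt, show k < k' from hkk⟩
      · refine ⟨hpA, ?_, by omega⟩
        have hne1 : p.1 ≠ k := by
          intro h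
          have := mch_pair_eq hM hpA h1 (Or.inr (Or.inl h))
          subst this
          simp only at hp2
          omega
        have hp1s := (hM.1 p hpA).2.1
        have := gap p.1 hp1s
        omega
  have hnot : (w, k') ∉ A.filter (fun p => p.1 < k' ∧ k' < p.2) := by
    simp only [Finset.mem_filter]
    rintro ⟨-, -, h⟩
    omega
  unfold depN
  rw [key, Finset.card_insert_of_notMem hnot]

lemma depN_pair {s : Finset ℕ} {A : Finset (ℕ × ℕ)} (hM : IsMch s A) (hNC : IsNCr A)
    {p : ℕ × ℕ} (hp : p ∈ A) :
    depN A p.1 = depN A p.2 := by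
  have hsort := (hM.1 p hp).1
  unfold depN
  congr 1
  ext q
  simp only [Finset.mem_filter]
  constructor
  · rintro ⟨hqA, h1, h2⟩
    have hqp : q ≠ p := by
      intro h
      subst h
      omega
    have hne : q.2 ≠ p.2 := (hM.2.2 q hqA p hp hqp).2.2.2
    have : ¬ (q.2 < p.2) := fun hlt => hNC q hqA p hp ⟨h1, h2, hlt⟩
    exact ⟨hqA, by omega, by omega⟩
  · rintro ⟨hqA, h1, h2⟩
    have hqp : q ≠ p := by
      intro h
      subst h
      omega
    have hne : q.1 ≠ p.1 := (hM.2.2 q hqA p hp hqp).1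
    have : ¬ (p.1 < q.1) := fun hlt => hNC p hp q hqA ⟨hlt, h1, h2⟩
    exact ⟨hqA, by omega, by omega⟩

lemma mch_erase {s : Finset ℕ} {A : Finset (ℕ × ℕ)} (hM : IsMch s A) {k k' : ℕ}
    (hp : (k, k') ∈ A) :
    IsMch ((s.erase k).erase k') (A.erase (k, k')) := by
  refine ⟨?_, ?_, ?_⟩
  · intro q hq
    have hqA := Finset.mem_of_mem_erase hq
    have hqp := (Finset.mem_erase.1 hq).1
    have hd := hM.2.2 q hqA (k, k') hp hqp
    have hb := hM.1 q hqA
    exact ⟨hb.1,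
      Finset.mem_erase.2 ⟨hd.2.1, Finset.mem_erase.2 ⟨hd.1, hb.2.1⟩⟩,
      Finset.mem_erase.2 ⟨hd.2.2.2, Finset.mem_erase.2 ⟨hd.2.2.1, hb.2.2⟩⟩⟩
  · intro x hx
    have hx2 := Finset.mem_erase.1 hx
    have hx1 := Finset.mem_erase.1 hx2.2
    obtain ⟨q, hq, hxq⟩ := hM.2.1 x hx1.2
    have hqp : q ≠ (k, k') := by
      rintro rfl
      rcases hxq with rfl | rfl
      · exact hx1.1 rfl
      · exact hx2.1 rfl
    exact ⟨q, Finset.mem_erase.2 ⟨hqp, hq⟩, hxq⟩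
  · intro p hpm q hq hne
    exact hM.2.2 p (Finset.mem_of_mem_erase hpm) q (Finset.mem_of_mem_erase hq) hne

end Abstract2

section Abstract3
open Finset

lemma mch_surgery {s : Finset ℕ} {A : Finset (ℕ × ℕ)} (hM : IsMch s A) (hNC : IsNCr A)
    {x k k' y : ℕ} (h1 : (x, k) ∈ A) (h2 : (k', y) ∈ A) (hkk : k < k')
    (gap : ∀ z ∈ s, ¬ (k < z ∧ z < k')) :
    IsMch ((s.erase k).erase k') (insert (x, y) ((A.erase (x, k)).erase (k', y)))
    ∧ IsNCr (insert (x, y) ((A.erase (x, k)).erase (k', y))) := by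
  have hxk : x < k := (hM.1 _ h1).1
  have hk'y : k' < y := (hM.1 _ h2).1
  have hxs : x ∈ s := (hM.1 _ h1).2.1
  have hks : k ∈ s := (hM.1 _ h1).2.2
  have hk's : k' ∈ s := (hM.1 _ h2).2.1
  have hys : y ∈ s := (hM.1 _ h2).2.2
  have h12 : (x, k) ≠ (k', y) := by
    intro h
    rw [Prod.mk.injEq] at h
    omega
  have hd12 := hM.2.2 _ h1 _ h2 h12
  have hxk' : x ≠ k' := hd12.1
  have hxy : x ≠ y := hd12.2.1
  have hky : k ≠ y := hd12.2.2.2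
  have hxyA : (x, y) ∉ A := by
    intro h
    have := mch_pair_eq hM h h1 (Or.inl rfl)
    rw [Prod.mk.injEq] at this
    exact hky (this.2.symm ▸ rfl)
  -- membership characterization
  have hmem : ∀ q, q ∈ insert (x, y) ((A.erase (x, k)).erase (k', y)) ↔
      q = (x, y) ∨ (q ∈ A ∧ q ≠ (x, k) ∧ q ≠ (k', y)) := by
    intro q
    simp only [Finset.mem_insert, Finset.mem_erase]
    tauto
  -- coordinates of surviving pairs avoid x k k' y
  have havoid : ∀ q ∈ A, q ≠ (x, k) → q ≠ (k', y) →
      q.1 ≠ x ∧ q.1 ≠ k ∧ q.1 ≠ k' ∧ q.1 ≠ y ∧ q.2 ≠ x ∧ q.2 ≠ k ∧ q.2 ≠ k' ∧ q.2 ≠ y := by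
    intro q hq hq1 hq2
    refine ⟨fun h => hq1 (mch_pair_eq hM hq h1 (Or.inl h)),
      fun h => hq1 (mch_pair_eq hM hq h1 (Or.inr (Or.inl h))),
      fun h => hq2 (mch_pair_eq hM hq h2 (Or.inl h)),
      fun h => hq2 (mch_pair_eq hM hq h2 (Or.inr (Or.inl h))),
      fun h => hq1 (mch_pair_eq hM hq h1 (Or.inr (Or.inr (Or.inl h)))),
      fun h => hq1 (mch_pair_eq hM hq h1 (Or.inr (Or.inr (Or.inr h)))),
      fun h => hq2 (mch_pair_eq hM hq h2 (Or.inr (Or.inr (Or.inl h)))),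
      fun h => hq2 (mch_pair_eq hM hq h2 (Or.inr (Or.inr (Or.inr h))))⟩
  constructor
  · refine ⟨?_, ?_, ?_⟩
    · intro q hq
      rw [hmem] at hq
      rcases hq with rfl | ⟨hqA, hq1, hq2⟩
      · refine ⟨by omega, ?_, ?_⟩
        · exact Finset.mem_erase.2 ⟨hxk', Finset.mem_erase.2 ⟨by omega, hxs⟩⟩
        · exact Finset.mem_erase.2 ⟨by omega, Finset.mem_erase.2 ⟨fun h => hky h.symm, hys⟩⟩
      · obtain ⟨-, hk1, hk'1, -, -, hk2, hk'2, -⟩ := havoid q hqA hq1 hq2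
        have hb := hM.1 q hqA
        exact ⟨hb.1, Finset.mem_erase.2 ⟨hk'1, Finset.mem_erase.2 ⟨hk1, hb.2.1⟩⟩,
          Finset.mem_erase.2 ⟨hk'2, Finset.mem_erase.2 ⟨hk2, hb.2.2⟩⟩⟩
    · intro z hz
      have hz2 := Finset.mem_erase.1 hz
      have hz1 := Finset.mem_erase.1 hz2.2
      obtain ⟨q, hq, hzq⟩ := hM.2.1 z hz1.2
      by_cases hq1 : q = (x, k)
      · subst hq1
        refine ⟨(x, y), (hmem _).2 (Or.inl rfl), ?_⟩
        rcases hzq with h | h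
        · exact Or.inl h
        · exact absurd h hz1.1
      · by_cases hq2 : q = (k', y)
        · subst hq2
          refine ⟨(x, y), (hmem _).2 (Or.inl rfl), ?_⟩
          rcases hzq with h | h
          · exact absurd h hz2.1
          · exact Or.inr h
        · exact ⟨q, (hmem _).2 (Or.inr ⟨hq, hq1, hq2⟩), hzq⟩
    · intro p hp q hq hne
      rw [hmem] at hp hq
      rcases hp with rfl | ⟨hpA, hp1, hp2⟩
      · rcases hq with rfl | ⟨hqA, hq1, hq2⟩
        · exact absurd rfl hne
        · obtain ⟨q1x, -, -, q1y, q2x, -, -, q2y⟩ := havoid q hqA hq1 hq2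
          exact ⟨fun h => q1x h.symm, fun h => q2x h.symm, fun h => q1y h.symm,
            fun h => q2y h.symm⟩
      · rcases hq with rfl | ⟨hqA, hq1, hq2⟩
        · obtain ⟨p1x, -, -, p1y, p2x, -, -, p2y⟩ := havoid p hpA hp1 hp2
          exact ⟨p1x, p1y, p2x, p2y⟩
        · exact hM.2.2 p hpA q hqA hne
  · -- noncrossing
    intro p hp q hq
    rw [hmem] at hp hq
    rintro ⟨hc1, hc2, hc3⟩
    rcases hp with rfl | ⟨hpA, hp1, hp2⟩
    · rcases hq with rfl | ⟨hqA, hq1, hq2⟩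
      · simp only at hc1 hc2 hc3
        omega
      · -- (x,y) crossed by old q : x < q.1 < y < q.2
        simp only at hc1 hc2 hc3
        obtain ⟨-, hk1, hk'1, -, -, -, -, -⟩ := havoid q hqA hq1 hq2
        have hq1s := (hM.1 q hqA).2.1
        have hgap := gap q.1 hq1s
        by_cases hcase : q.1 < k
        · exact hNC _ h1 q hqA ⟨hc1, hcase, by omega⟩
        · have : k' < q.1 := by omega
          exact hNC _ h2 q hqA ⟨this, hc2, hc3⟩
    · rcases hq with rfl | ⟨hqA, hq1, hq2⟩
      · -- old p crosses (x,y) : p.1 < x < p.2 < y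
        simp only at hc1 hc2 hc3
        obtain ⟨-, -, -, -, -, hk2, hk'2, -⟩ := havoid p hpA hp1 hp2
        have hp2s := (hM.1 p hpA).2.2
        have hgap := gap p.2 hp2s
        by_cases hcase : p.2 < k
        · exact hNC p hpA _ h1 ⟨hc1, hc2, hcase⟩
        · have h5 : k' < p.2 := by omega
          exact hNC p hpA _ h2 ⟨by omega, h5, hc3⟩
      · exact hNC p hpA q hqA ⟨hc1, hc2, hc3⟩

end Abstract3

section Abstract4
open Finset

lemma card_erase2 {s : Finset ℕ} {k k' : ℕ} (hk : k ∈ s) (hk' : k' ∈ s) (hne : k ≠ k') :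
    ((s.erase k).erase k').card + 2 = s.card := by
  have h1 : k' ∈ s.erase k := Finset.mem_erase.2 ⟨fun h => hne h.symm, hk'⟩
  have e1 : (s.erase k).card = s.card - 1 := Finset.card_erase_of_mem hk
  have e2 : ((s.erase k).erase k').card = (s.erase k).card - 1 := Finset.card_erase_of_mem h1
  have p1 : 0 < s.card := Finset.card_pos.2 ⟨k, hk⟩
  have p2 : 0 < (s.erase k).card := Finset.card_pos.2 ⟨k', h1⟩
  omega

lemma keyLemma : ∀ (N : ℕ) (s : Finset ℕ) (A B : Finset (ℕ × ℕ)),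
    s.card ≤ N → IsMch s A → IsNCr A → IsMch s B → IsNCr B →
    (∀ p ∈ B, depN A p.1 % 2 = depN A p.2 % 2) →
    ∀ c, crossN A c ≤ crossN B c := by
  intro N
  induction N with
  | zero =>
    intro s A B hcard hMA hNCA hMB hNCB hmono c
    have hs : s = ∅ := Finset.card_eq_zero.1 (Nat.le_zero.1 hcard)
    subst hs
    rw [mch_empty hMA]
    simp [crossN]
  | succ N ih =>
    intro s A B hcard hMA hNCA hMB hNCB hmono c
    rcases s.eq_empty_or_nonempty with rfl | hs
    · rw [mch_empty hMA]
      simp [crossN]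
    obtain ⟨k, k', hkkB, hkk, gap⟩ := exists_innermost hMB hNCB hs
    have hks : k ∈ s := (hMB.1 _ hkkB).2.1
    have hk's : k' ∈ s := (hMB.1 _ hkkB).2.2
    have hmkk : depN A k % 2 = depN A k' % 2 := hmono (k, k') hkkB
    have hcard' : ((s.erase k).erase k').card ≤ N := by
      have := card_erase2 hks hk's (by omega)
      omega
    have hMB' := mch_erase hMB hkkB
    have hNCB' : IsNCr (B.erase (k, k')) := ncr_subset (Finset.erase_subset _ _) hNCB
    have hBc : crossN B c = crossN (B.erase (k, k')) c
        + (if k ≤ c ∧ c < k' then 1 else 0) := by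
      have e := card_filter_erase (fun p => p.1 ≤ c ∧ c < p.2) hkkB
      simp only at e
      unfold crossN
      omega
    obtain ⟨pk, hpkA, hk⟩ := hMA.2.1 k hks
    obtain ⟨pk', hpk'A, hk'⟩ := hMA.2.1 k' hk's
    by_cases hsame : pk = pk'
    · -- case (i): (k,k') ∈ A
      have hA : (k, k') ∈ A := by
        subst hsame
        have hsort := (hMA.1 _ hpkA).1
        rcases hk with h | h <;> rcases hk' with h' | h'
        · omega
        · have hpe : pk = (k, k') := by
            rw [Prod.ext_iff]
            exact ⟨h.symm, h'.symm⟩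
          rwa [hpe] at hpkA
        · omega
        · omega
      have hMA' := mch_erase hMA hA
      have hNCA' : IsNCr (A.erase (k, k')) := ncr_subset (Finset.erase_subset _ _) hNCA
      have hdep : ∀ t ∈ (s.erase k).erase k', depN (A.erase (k, k')) t = depN A t := by
        intro t ht
        have hts : t ∈ s := Finset.mem_of_mem_erase (Finset.mem_of_mem_erase ht)
        have e := card_filter_erase (fun p => p.1 < t ∧ t < p.2) hA
        simp only at e
        have hgap := gap t hts
        unfold depN
        rw [if_neg (by omega)] at e
        omega
      have hmono' : ∀ p ∈ B.erase (k, k'),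
          depN (A.erase (k, k')) p.1 % 2 = depN (A.erase (k, k')) p.2 % 2 := by
        intro p hp
        have hb := hMB'.1 p hp
        rw [hdep p.1 hb.2.1, hdep p.2 hb.2.2]
        exact hmono p (Finset.mem_of_mem_erase hp)
      have hIH := ih _ _ _ hcard' hMA' hNCA' hMB' hNCB' hmono' c
      have hAc : crossN A c = crossN (A.erase (k, k')) c
          + (if k ≤ c ∧ c < k' then 1 else 0) := by
        have e := card_filter_erase (fun p => p.1 ≤ c ∧ c < p.2) hA
        simp only at e
        unfold crossN
        omega
      rw [hAc, hBc]
      omega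
    · rcases hk with hk | hk <;> rcases hk' with hk' | hk'
      · -- both openers : parity contradiction
        exfalso
        obtain ⟨z, rfl⟩ : ∃ z, pk = (k, z) := ⟨pk.2, by rw [hk]⟩
        obtain ⟨w, rfl⟩ : ∃ w, pk' = (k', w) := ⟨pk'.2, by rw [hk']⟩
        have := depN_op_op hMA hNCA hpkA hpk'A hkk gap
        omega
      · -- k opener, k' closer : crossing contradiction
        exfalso
        obtain ⟨z, rfl⟩ : ∃ z, pk = (k, z) := ⟨pk.2, by rw [hk]⟩
        obtain ⟨w, rfl⟩ : ∃ w, pk' = (w, k') := ⟨pk'.1, by rw [hk']⟩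
        have hz1 : k < z := (hMA.1 _ hpkA).1
        have hzs : z ∈ s := (hMA.1 _ hpkA).2.2
        have hzk' : z ≠ k' := by
          intro h
          exact hsame (mch_pair_eq hMA hpkA hpk'A (Or.inr (Or.inr (Or.inr h))))
        have hzgt : k' < z := by
          have := gap z hzs
          omega
        have hw1 : w < k' := (hMA.1 _ hpk'A).1
        have hws : w ∈ s := (hMA.1 _ hpk'A).2.1
        have hwk : w ≠ k := by
          intro h
          exact hsame (mch_pair_eq hMA hpkA hpk'A (Or.inl h.symm))
        have hwlt : w < k := by
          have := gap w hws
          omega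
        exact hNCA _ hpk'A _ hpkA ⟨hwlt, hkk, hzgt⟩
      · -- k closer, k' opener : surgery case
        obtain ⟨x, rfl⟩ : ∃ x, pk = (x, k) := ⟨pk.1, by rw [hk]⟩
        obtain ⟨y, rfl⟩ : ∃ y, pk' = (k', y) := ⟨pk'.2, by rw [hk']⟩
        have hxk : x < k := (hMA.1 _ hpkA).1
        have hk'y : k' < y := (hMA.1 _ hpk'A).1
        have hne12 : (x, k) ≠ (k', y) := by
          intro h
          rw [Prod.mk.injEq] at h
          omega
        have hxyA : (x, y) ∉ A := by
          intro h
          have he := mch_pair_eq hMA h hpkA (Or.inl rfl)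
          rw [Prod.mk.injEq] at he
          omega
        obtain ⟨hMA', hNCA'⟩ := mch_surgery hMA hNCA hpkA hpk'A hkk gap
        have hdep : ∀ t ∈ (s.erase k).erase k',
            depN (insert (x, y) ((A.erase (x, k)).erase (k', y))) t = depN A t := by
          intro t ht
          have ht2 := Finset.mem_erase.1 ht
          have ht1 := Finset.mem_erase.1 ht2.2
          have e := card_surgery (fun p => p.1 < t ∧ t < p.2) hpkA hpk'A hne12 hxyA
          simp only at e
          have hgap := gap t ht1.2
          have htk : t ≠ k := ht1.1
          have htk' : t ≠ k' := ht2.1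
          unfold depN
          split_ifs at e <;> omega
        have hmono' : ∀ p ∈ B.erase (k, k'),
            depN (insert (x, y) ((A.erase (x, k)).erase (k', y))) p.1 % 2
              = depN (insert (x, y) ((A.erase (x, k)).erase (k', y))) p.2 % 2 := by
          intro p hp
          have hb := hMB'.1 p hp
          rw [hdep p.1 hb.2.1, hdep p.2 hb.2.2]
          exact hmono p (Finset.mem_of_mem_erase hp)
        have hIH := ih _ _ _ hcard' hMA' hNCA' hMB' hNCB' hmono' c
        have eA := card_surgery (fun p => p.1 ≤ c ∧ c < p.2) hpkA hpk'A hne12 hxyA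
        simp only at eA
        unfold crossN at hIH hBc ⊢
        split_ifs at eA hBc <;> omega
      · -- both closers : parity contradiction
        exfalso
        obtain ⟨x, rfl⟩ : ∃ x, pk = (x, k) := ⟨pk.1, by rw [hk]⟩
        obtain ⟨w, rfl⟩ : ∃ w, pk' = (w, k') := ⟨pk'.1, by rw [hk']⟩
        have := depN_cl_cl hMA hNCA hpkA hpk'A hkk gap
        omega

end Abstract4

section Abstract5
open Finset

lemma crossDet : ∀ (N : ℕ) (s : Finset ℕ) (A B : Finset (ℕ × ℕ)),
    s.card ≤ N → IsMch s A → IsNCr A → IsMch s B → IsNCr B →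
    (∀ c, crossN A c = crossN B c) → A = B := by
  intro N
  induction N with
  | zero =>
    intro s A B hcard hMA hNCA hMB hNCB _
    have hs : s = ∅ := Finset.card_eq_zero.1 (Nat.le_zero.1 hcard)
    subst hs
    rw [mch_empty hMA, mch_empty hMB]
  | succ N ih =>
    intro s A B hcard hMA hNCA hMB hNCB hcr
    rcases s.eq_empty_or_nonempty with rfl | hs
    · rw [mch_empty hMA, mch_empty hMB]
    obtain ⟨k, k', hkkB, hkk, gap⟩ := exists_innermost hMB hNCB hs
    have hks : k ∈ s := (hMB.1 _ hkkB).2.1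
    have hk's : k' ∈ s := (hMB.1 _ hkkB).2.2
    have hcard' : ((s.erase k).erase k').card ≤ N := by
      have := card_erase2 hks hk's (by omega)
      omega
    -- k is an opener in A
    obtain ⟨pk, hpkA, hk⟩ := hMA.2.1 k hks
    have hkop : k = pk.1 := by
      rcases hk with h | h
      · exact h
      · exfalso
        obtain ⟨x, rfl⟩ : ∃ x, pk = (x, k) := ⟨pk.1, by rw [h]⟩
        have hxk : x < k := (hMA.1 _ hpkA).1
        have eA := crossN_cl hMA hpkA
        have eB := crossN_op hMB hkkB (by omega)
        have c1 := hcr k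
        have c2 := hcr (k - 1)
        omega
    obtain ⟨z, rfl⟩ : ∃ z, pk = (k, z) := ⟨pk.2, by rw [hkop]⟩
    -- z = k'
    have hzA : z = k' := by
      by_contra hzk'
      have hz1 : k < z := (hMA.1 _ hpkA).1
      have hzs : z ∈ s := (hMA.1 _ hpkA).2.2
      have hzgt : k' < z := by
        have := gap z hzs
        omega
      -- k' must be a closer in A
      obtain ⟨pk', hpk'A, hk'⟩ := hMA.2.1 k' hk's
      rcases hk' with h | h
      · -- k' opener in A, closer in B: cross contradiction
        obtain ⟨w, rfl⟩ : ∃ w, pk' = (k', w) := ⟨pk'.2, by rw [h]⟩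
        have eA := crossN_op hMA hpk'A (by omega)
        have eB := crossN_cl hMB hkkB
        have c1 := hcr k'
        have c2 := hcr (k' - 1)
        omega
      · -- k' closer in A : crossing contradiction
        obtain ⟨w, rfl⟩ : ∃ w, pk' = (w, k') := ⟨pk'.1, by rw [h]⟩
        have hw1 : w < k' := (hMA.1 _ hpk'A).1
        have hws : w ∈ s := (hMA.1 _ hpk'A).2.1
        have hwk : w ≠ k := by
          intro hh
          subst hh
          have := mch_pair_eq hMA hpkA hpk'A (Or.inl rfl)
          rw [Prod.mk.injEq] at this
          omega
        have hwlt : w < k := by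
          have := gap w hws
          omega
        exact hNCA _ hpk'A _ hpkA ⟨hwlt, hkk, hzgt⟩
    rw [hzA] at hpkA
    -- now (k,k') ∈ A ∩ B, recurse
    have hMA' := mch_erase hMA hpkA
    have hMB' := mch_erase hMB hkkB
    have hNCA' : IsNCr (A.erase (k, k')) := ncr_subset (Finset.erase_subset _ _) hNCA
    have hNCB' : IsNCr (B.erase (k, k')) := ncr_subset (Finset.erase_subset _ _) hNCB
    have hcr' : ∀ c, crossN (A.erase (k, k')) c = crossN (B.erase (k, k')) c := by
      intro c
      have eA := card_filter_erase (fun p => p.1 ≤ c ∧ c < p.2) hpkA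
      have eB := card_filter_erase (fun p => p.1 ≤ c ∧ c < p.2) hkkB
      have := hcr c
      unfold crossN at this ⊢
      omega
    have hAB' := ih _ _ _ hcard' hMA' hNCA' hMB' hNCB' hcr'
    have hA : insert (k, k') (A.erase (k, k')) = A := Finset.insert_erase hpkA
    have hB : insert (k, k') (B.erase (k, k')) = B := Finset.insert_erase hkkB
    rw [← hA, ← hB, hAB']

lemma phi_eq_sum {s : Finset ℕ} {A : Finset (ℕ × ℕ)} {R : ℕ} (hM : IsMch s A)
    (hR : ∀ x ∈ s, x < R) :
    PhiN A = ∑ c ∈ Finset.range R, crossN A c := by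
  unfold PhiN crossN
  have : ∀ c ∈ Finset.range R, (A.filter fun p => p.1 ≤ c ∧ c < p.2).card
      = ∑ p ∈ A, if p.1 ≤ c ∧ c < p.2 then 1 else 0 := by
    intro c _
    exact Finset.card_filter _ _
  rw [Finset.sum_congr rfl this, Finset.sum_comm]
  apply Finset.sum_congr rfl
  intro p hp
  have h2R : p.2 < R := hR p.2 (hM.1 p hp).2.2
  have : ∑ c ∈ Finset.range R, (if p.1 ≤ c ∧ c < p.2 then 1 else 0)
      = ((Finset.range R).filter fun c => p.1 ≤ c ∧ c < p.2).card := by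
    rw [Finset.card_filter]
  rw [this]
  have : (Finset.range R).filter (fun c => p.1 ≤ c ∧ c < p.2) = Finset.Ico p.1 p.2 := by
    ext c
    simp only [Finset.mem_filter, Finset.mem_range, Finset.mem_Ico]
    omega
  rw [this, Nat.card_Ico]

lemma crossN_zero {s : Finset ℕ} {A : Finset (ℕ × ℕ)} {R : ℕ} (hM : IsMch s A)
    (hR : ∀ x ∈ s, x < R) {c : ℕ} (hc : R ≤ c) : crossN A c = 0 := by
  unfold crossN
  rw [Finset.card_eq_zero, Finset.filter_eq_empty_iff]
  intro p hp
  have := hR p.2 (hM.1 p hp).2.2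
  omega

end Abstract5

section Translation
open Finset

variable {m n : ℕ}

lemma beta_lt (u : Fin m ⊕ Fin n) : beta m n u < m + n := by
  cases u with
  | inl i => have := i.isLt; simp only [beta]; omega
  | inr j => have := j.isLt; simp only [beta]; omega

lemma beta_inj : Function.Injective (beta m n) := by
  rintro (i | j) (i' | j') h
  · simp only [beta] at h
    exact congrArg Sum.inl (Fin.ext h)
  · exfalso
    have := i.isLt; have := j'.isLt
    simp only [beta] at h
    omega
  · exfalso
    have := j.isLt; have := i'.isLt
    simp only [beta] at h
    omega
  · simp only [beta] at h
    have := j.isLt; have := j'.isLt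
    exact congrArg Sum.inr (Fin.ext (by omega))

lemma beta_surj {c : ℕ} (hc : c < m + n) : ∃ u : Fin m ⊕ Fin n, beta m n u = c := by
  by_cases h : c < m
  · exact ⟨Sum.inl ⟨c, h⟩, rfl⟩
  · refine ⟨Sum.inr ⟨m + n - 1 - c, by omega⟩, ?_⟩
    show m + n - 1 - (m + n - 1 - c) = c
    omega

lemma brauer_partner {a : Ptn m n} (hB : IsBrauer a) (u : Fin m ⊕ Fin n) :
    ∃ v, v ≠ u ∧ a.r u v ∧ ∀ w, a.r u w → w = u ∨ w = v := by
  have h2 := hB u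
  have hrefl : a.r u u := a.iseqv.refl u
  rw [Nat.card_eq_two_iff' (⟨u, hrefl⟩ : {v // a.r u v})] at h2
  obtain ⟨y, hy, hyu⟩ := h2
  refine ⟨y.1, fun h => hy (Subtype.ext h), y.2, ?_⟩
  intro w hw
  by_cases hwu : w = u
  · exact Or.inl hwu
  · have : (⟨w, hw⟩ : {v // a.r u v}) = y := hyu ⟨w, hw⟩ (fun h => hwu (congrArg Subtype.val h))
    exact Or.inr (congrArg Subtype.val this)

lemma rel_unique {a : Ptn m n} (hB : IsBrauer a) {u v w : Fin m ⊕ Fin n}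
    (h1 : a.r u v) (h2 : a.r u w) (hv : v ≠ u) (hw : w ≠ u) : v = w := by
  obtain ⟨p, hpne, hpr, hpu⟩ := brauer_partner hB u
  rcases hpu v h1 with rfl | rfl
  · exact absurd rfl hv
  · rcases hpu w h2 with rfl | rfl
    · exact absurd rfl hw
    · rfl

noncomputable def pairsP (a : Ptn m n) : Finset (ℕ × ℕ) :=
  ((Finset.univ : Finset ((Fin m ⊕ Fin n) × (Fin m ⊕ Fin n))).filter
    (fun q => a.r q.1 q.2 ∧ beta m n q.1 < beta m n q.2)).image
    (fun q => (beta m n q.1, beta m n q.2))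

lemma mem_pairsP {a : Ptn m n} {c d : ℕ} :
    (c, d) ∈ pairsP a ↔ ∃ u v : Fin m ⊕ Fin n, a.r u v ∧ beta m n u < beta m n v ∧
      beta m n u = c ∧ beta m n v = d := by
  unfold pairsP
  simp only [Finset.mem_image, Finset.mem_filter, Finset.mem_univ, true_and, Prod.mk.injEq]
  constructor
  · rintro ⟨⟨u, v⟩, ⟨hr, hlt⟩, h1, h2⟩
    exact ⟨u, v, hr, hlt, h1, h2⟩
  · rintro ⟨u, v, hr, hlt, h1, h2⟩
    exact ⟨(u, v), ⟨hr, hlt⟩, h1, h2⟩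

lemma mem_pairsP' {a : Ptn m n} {p : ℕ × ℕ} (hp : p ∈ pairsP a) :
    ∃ u v : Fin m ⊕ Fin n, a.r u v ∧ beta m n u < beta m n v ∧
      beta m n u = p.1 ∧ beta m n v = p.2 :=
  mem_pairsP.1 (by rwa [Prod.mk.eta])

lemma mch_pairsP {a : Ptn m n} (hB : IsBrauer a) :
    IsMch (Finset.range (m + n)) (pairsP a) := by
  refine ⟨?_, ?_, ?_⟩
  · intro p hp
    obtain ⟨u, v, hr, hlt, h1, h2⟩ := mem_pairsP' hp
    refine ⟨by omega, ?_, ?_⟩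
    · rw [Finset.mem_range, ← h1]; exact beta_lt u
    · rw [Finset.mem_range, ← h2]; exact beta_lt v
  · intro x hx
    obtain ⟨u, hu⟩ := beta_surj (Finset.mem_range.1 hx)
    obtain ⟨v, hvne, hrel, -⟩ := brauer_partner hB u
    have hne : beta m n u ≠ beta m n v := fun h => hvne (beta_inj h).symm
    rcases lt_or_gt_of_ne hne with h | h
    · exact ⟨(beta m n u, beta m n v), mem_pairsP.2 ⟨u, v, hrel, h, rfl, rfl⟩,
        Or.inl hu.symm⟩
    · exact ⟨(beta m n v, beta m n u), mem_pairsP.2 ⟨v, u, a.iseqv.symm hrel, h, rfl, rfl⟩,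
        Or.inr hu.symm⟩
  · intro p hp q hq hpq
    obtain ⟨u, v, hr, hlt, hu1, hv1⟩ := mem_pairsP' hp
    obtain ⟨u', v', hr', hlt', hu2, hv2⟩ := mem_pairsP' hq
    have hvu : v ≠ u := fun h => by rw [h] at hlt; omega
    have hv'u' : v' ≠ u' := fun h => by rw [h] at hlt'; omega
    have hpeq : p = (beta m n u, beta m n v) := by rw [hu1, hv1]
    have hqeq : q = (beta m n u', beta m n v') := by rw [hu2, hv2]
    refine ⟨?_, ?_, ?_, ?_⟩
    · intro h
      have huu : u = u' := beta_inj (by omega)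
      have hr'2 : a.r u v' := by rw [huu]; exact hr'
      have hv'u : v' ≠ u := fun hh => hv'u' (hh.trans huu)
      have hvv : v = v' := rel_unique hB hr hr'2 hvu hv'u
      exact hpq (by rw [hpeq, hqeq, huu, hvv])
    · intro h
      have huv' : u = v' := beta_inj (by omega)
      have hr'' : a.r u' u := by rw [huv']; exact hr'
      have hb : beta m n u' < beta m n u := by rw [huv']; exact hlt'
      have hu'neu : u' ≠ u := fun hh => by rw [hh] at hb; omega
      have hveq : v = u' := rel_unique hB hr (a.iseqv.symm hr'') hvu hu'neu
      have hbv : beta m n v = beta m n u' := by rw [hveq]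
      omega
    · intro h
      have hvu'2 : v = u' := beta_inj (by omega)
      have hrv : a.r v u := a.iseqv.symm hr
      have hrvv' : a.r v v' := by rw [hvu'2]; exact hr'
      have hune : u ≠ v := fun hh => by rw [hh] at hlt; omega
      have hbv : beta m n v = beta m n u' := by rw [hvu'2]
      have hv'nev : v' ≠ v := fun hh => by rw [hh] at hlt'; omega
      have huv' : u = v' := rel_unique hB hrv hrvv' hune hv'nev
      have hbu : beta m n u = beta m n v' := by rw [huv']
      omega
    · intro h
      have hvv : v = v' := beta_inj (by omega)
      have hrv : a.r v u := a.iseqv.symm hr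
      have hrv' : a.r v u' := by rw [hvv]; exact a.iseqv.symm hr'
      have hune : u ≠ v := fun hh => by rw [hh] at hlt; omega
      have hu'ne : u' ≠ v := fun hh => by
        rw [← hh] at hvv
        rw [hvv] at hlt'
        omega
      have huu : u = u' := rel_unique hB hrv hrv' hune hu'ne
      exact hpq (by rw [hpeq, hqeq, huu, hvv])

lemma ncr_pairsP {a : Ptn m n} (hTL : IsTL a) : IsNCr (pairsP a) := by
  rintro p hp q hq ⟨h1, h2, h3⟩
  obtain ⟨u, v, hr, hlt, hu1, hv1⟩ := mem_pairsP' hp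
  obtain ⟨u', v', hr', hlt', hu2, hv2⟩ := mem_pairsP' hq
  exact hTL.2 ⟨u, v, u', v', hr, hr', by omega, by omega, by omega⟩

lemma pairsP_inj {a b : Ptn m n} (hBa : IsBrauer a) (hBb : IsBrauer b)
    (h : pairsP a = pairsP b) : a = b := by
  have key : ∀ (a b : Ptn m n), pairsP a = pairsP b → ∀ u v, a.r u v → b.r u v := by
    intro a b hab u v hr
    by_cases huv : u = v
    · subst huv; exact b.iseqv.refl _
    · have hne : beta m n u ≠ beta m n v := fun he => huv (beta_inj he)
      rcases lt_or_gt_of_ne hne with hlt | hgt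
      · have hmem : (beta m n u, beta m n v) ∈ pairsP a :=
          mem_pairsP.2 ⟨u, v, hr, hlt, rfl, rfl⟩
        rw [hab] at hmem
        obtain ⟨u', v', hr', -, h1, h2⟩ := mem_pairsP.1 hmem
        have : u' = u := beta_inj h1
        have h2' : v' = v := beta_inj h2
        rw [← this, ← h2']
        exact hr'
      · have hmem : (beta m n v, beta m n u) ∈ pairsP a :=
          mem_pairsP.2 ⟨v, u, a.iseqv.symm hr, hgt, rfl, rfl⟩
        rw [hab] at hmem
        obtain ⟨u', v', hr', -, h1, h2⟩ := mem_pairsP.1 hmem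
        have hv' : u' = v := beta_inj h1
        have hu' : v' = u := beta_inj h2
        rw [← hu', ← hv']
        exact b.iseqv.symm hr'
  apply Setoid.ext
  intro u v
  exact ⟨key a b h u v, key b a h.symm u v⟩

end Translation

section Final
open Finset

variable {m n : ℕ}

noncomputable def XaF (a : Ptn m n) : Finset (Fin m) :=
  Finset.univ.filter fun i => depN (pairsP a) (beta m n (Sum.inl i)) % 2 = 0

noncomputable def YaF (a : Ptn m n) : Finset (Fin n) :=
  Finset.univ.filter fun j => depN (pairsP a) (beta m n (Sum.inr j)) % 2 = 0

lemma mem_EU (a : Ptn m n) (u : Fin m ⊕ Fin n) :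
    (u ∈ Sum.inl '' ((XaF a : Finset (Fin m)) : Set (Fin m))
        ∪ Sum.inr '' ((YaF a : Finset (Fin n)) : Set (Fin n)))
      ↔ depN (pairsP a) (beta m n u) % 2 = 0 := by
  cases u with
  | inl i =>
    simp only [Set.mem_union, Set.mem_image, Finset.mem_coe, XaF, YaF,
      Finset.mem_filter, Finset.mem_univ, true_and]
    constructor
    · rintro (⟨x, hx, hxe⟩ | ⟨y, hy, hye⟩)
      · obtain rfl : x = i := Sum.inl_injective hxe
        exact hx
      · exact absurd hye (by simp)
    · intro h
      exact Or.inl ⟨i, h, rfl⟩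
  | inr j =>
    simp only [Set.mem_union, Set.mem_image, Finset.mem_coe, XaF, YaF,
      Finset.mem_filter, Finset.mem_univ, true_and]
    constructor
    · rintro (⟨x, hx, hxe⟩ | ⟨y, hy, hye⟩)
      · exact absurd hxe (by simp)
      · obtain rfl : y = j := Sum.inr_injective hye
        exact hy
    · intro h
      exact Or.inr ⟨j, h, rfl⟩

lemma union_self {a : Ptn m n} (hB : IsBrauer a) (hTL : IsTL a) :
    IsUnionOfBlocks a (XaF a) (YaF a) := by
  intro u v hr
  rw [mem_EU, mem_EU]
  by_cases huv : u = v
  · rw [huv]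
  · have hne : beta m n u ≠ beta m n v := fun he => huv (beta_inj he)
    rcases lt_or_gt_of_ne hne with hlt | hgt
    · have hp : (beta m n u, beta m n v) ∈ pairsP a := mem_pairsP.2 ⟨u, v, hr, hlt, rfl, rfl⟩
      have hd : depN (pairsP a) (beta m n u) = depN (pairsP a) (beta m n v) :=
        depN_pair (mch_pairsP hB) (ncr_pairsP hTL) hp
      rw [hd]
    · have hp : (beta m n v, beta m n u) ∈ pairsP a :=
        mem_pairsP.2 ⟨v, u, a.iseqv.symm hr, hgt, rfl, rfl⟩
      have hd : depN (pairsP a) (beta m n v) = depN (pairsP a) (beta m n u) :=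
        depN_pair (mch_pairsP hB) (ncr_pairsP hTL) hp
      rw [hd]

lemma mono_of_union {a b : Ptn m n} (hBb : IsBrauer b)
    (hU : IsUnionOfBlocks b (XaF a) (YaF a)) :
    ∀ p ∈ pairsP b, depN (pairsP a) p.1 % 2 = depN (pairsP a) p.2 % 2 := by
  intro p hp
  obtain ⟨u, v, hr, hlt, h1, h2⟩ := mem_pairsP' hp
  have hiff := hU u v hr
  rw [mem_EU, mem_EU] at hiff
  rw [← h1, ← h2]
  rcases Nat.mod_two_eq_zero_or_one (depN (pairsP a) (beta m n u)) with h | h <;>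
    rcases Nat.mod_two_eq_zero_or_one (depN (pairsP a) (beta m n v)) with h' | h'
  · rw [h, h']
  · exfalso; rw [h, h'] at hiff; simpa using hiff.1 rfl
  · exfalso; rw [h, h'] at hiff; simpa using hiff.2 rfl
  · rw [h, h']

end Final

theorem tl_matrices_linearIndependent' (K : Type) [Field K] [CharZero K] (m n : ℕ) :
    LinearIndependent K (fun a : {a : Ptn m n // IsTL a} => ptnMatrix K a.1) := by
  rw [linearIndependent_iff]
  intro l hl
  by_contra hlne
  have hsupp : l.support.Nonempty := Finsupp.support_nonempty_iff.2 hlne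
  obtain ⟨amax, hamem, hmax⟩ :=
    Finset.exists_max_image l.support (fun b => PhiN (pairsP b.1)) hsupp
  have hBa : IsBrauer amax.1 := amax.2.1
  have hMA := mch_pairsP (m := m) (n := n) hBa
  have hNCA := ncr_pairsP amax.2
  have hR : ∀ x ∈ Finset.range (m + n), x < m + n := fun x hx => Finset.mem_range.1 hx
  rw [Finsupp.linearCombination_apply, Finsupp.sum] at hl
  have heval : ∑ b ∈ l.support,
      l b * (ptnMatrix K b.1 (XaF amax.1) (YaF amax.1)) = 0 := by
    have h0 := congrArg (fun M : Matrix (Finset (Fin m)) (Finset (Fin n)) K =>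
      M (XaF amax.1) (YaF amax.1)) hl
    simpa [Matrix.sum_apply] using h0
  have heval2 : ∑ b ∈ l.support,
      (if IsUnionOfBlocks b.1 (XaF amax.1) (YaF amax.1) then l b else 0) = 0 := by
    have hcongr : ∀ b ∈ l.support,
        (if IsUnionOfBlocks b.1 (XaF amax.1) (YaF amax.1) then l b else 0)
          = l b * (ptnMatrix K b.1 (XaF amax.1) (YaF amax.1)) := by
      intro b _
      unfold ptnMatrix
      rw [Matrix.of_apply]
      by_cases h : IsUnionOfBlocks b.1 (XaF amax.1) (YaF amax.1)
      · rw [if_pos h, if_pos h, mul_one]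
      · rw [if_neg h, if_neg h, mul_zero]
    exact (Finset.sum_congr rfl hcongr).trans heval
  rw [← Finset.sum_filter] at heval2
  have hsingle : l.support.filter
      (fun b => IsUnionOfBlocks b.1 (XaF amax.1) (YaF amax.1)) = {amax} := by
    rw [Finset.eq_singleton_iff_unique_mem]
    constructor
    · exact Finset.mem_filter.2 ⟨hamem, union_self hBa amax.2⟩
    · intro b hb
      obtain ⟨hbS, hbU⟩ := Finset.mem_filter.1 hb
      have hBb : IsBrauer b.1 := b.2.1
      have hMB := mch_pairsP (m := m) (n := n) hBb
      have hNCB := ncr_pairsP b.2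
      have hmono := mono_of_union hBb hbU
      have hcross := keyLemma (m + n) (Finset.range (m + n)) _ _
        (le_of_eq (Finset.card_range _)) hMA hNCA hMB hNCB hmono
      have hφa := phi_eq_sum hMA hR
      have hφb := phi_eq_sum hMB hR
      have hle : PhiN (pairsP amax.1) ≤ PhiN (pairsP b.1) := by
        rw [hφa, hφb]
        exact Finset.sum_le_sum (fun c _ => hcross c)
      have hge : PhiN (pairsP b.1) ≤ PhiN (pairsP amax.1) := hmax b hbS
      have hceq : ∀ c ∈ Finset.range (m + n),
          crossN (pairsP amax.1) c = crossN (pairsP b.1) c := by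
        have hsums : ∑ c ∈ Finset.range (m + n), crossN (pairsP amax.1) c
            = ∑ c ∈ Finset.range (m + n), crossN (pairsP b.1) c := by
          omega
        exact (Finset.sum_eq_sum_iff_of_le (fun c _ => hcross c)).1 hsums
      have hcall : ∀ c, crossN (pairsP amax.1) c = crossN (pairsP b.1) c := by
        intro c
        by_cases hc : c < m + n
        · exact hceq c (Finset.mem_range.2 hc)
        · rw [crossN_zero hMA hR (by omega), crossN_zero hMB hR (by omega)]
      have hAB := crossDet (m + n) (Finset.range (m + n)) _ _
        (le_of_eq (Finset.card_range _)) hMA hNCA hMB hNCB hcall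
      exact Subtype.ext (pairsP_inj hBa hBb hAB).symm
  rw [hsingle, Finset.sum_singleton] at heval2
  exact (Finsupp.mem_support_iff.1 hamem) heval2


/-- over a field of characteristic zero, the matrices `ā` for
Temperley–Lieb partitions `a ∈ TL_{m,n}` are linearly independent (faithfulness of the
representation of the linear Temperley–Lieb category `TL(K,2)`). -/
theorem tl_matrices_linearIndependent (K : Type) [Field K] [CharZero K] (m n : ℕ) :
    LinearIndependent K (fun a : {a : Ptn m n // IsTL a} => ptnMatrix K a.1) := by
  exact tl_matrices_linearIndependent' K m n
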